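/- In the RHO combinator calculus, with D(x,v,w) := d(x,v,w) | fw(v,x) | *(w), the process *_{(x,v,w)}P := m(x, D(x,v,w) | P) | D(x,v,w) reduces in three steps (up to structural congruence) to *_{(x,v,w)}P | P, provided x, v, w are pairwise distinct names. -/

import Mathlib

-- RHO combinator calculus: processes and (quoted) names
mutual
  inductive CProc : Type
    | zero : CProc
    | msg (a : CName) (P : CProc) : CProc
    | d (a b c : CName) : CProc
    | k (a : CName) : CProc
    | fw (a b : CName) : CProc
    | br (a b : CName) : CProc
    | bl (a b : CName) : CProc
    | s (a b c : CName) : CProc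
    | drop (a : CName) : CProc
    | par (P Q : CProc) : CProc
  inductive CName : Type
    | quote (P : CProc) : CName
end

open CProc

/-- Structural congruence: least congruence making `(|,0)` a commutative monoid
and satisfying `*(@(P)) ≡ P`. -/
inductive SC : CProc → CProc → Prop
  | refl (P) : SC P P
  | symm {P Q} : SC P Q → SC Q P
  | trans {P Q R} : SC P Q → SC Q R → SC P R
  | parAssoc (P Q R) : SC (par (par P Q) R) (par P (par Q R))
  | parComm (P Q) : SC (par P Q) (par Q P)
  | parZero (P) : SC (par P zero) P
  | parCong {P P' Q Q'} : SC P P' → SC Q Q' → SC (par P Q) (par P' Q')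
  | msgCong (a) {P Q} : SC P Q → SC (msg a P) (msg a Q)
  | dropQuote (P) : SC (drop (CName.quote P)) P

/-- Single-step reduction of the RHO combinator calculus. -/
inductive Red : CProc → CProc → Prop
  | comm_d (a b c P) : Red (par (d a b c) (msg a P)) (par (msg b P) (msg c P))
  | comm_k (a P) : Red (par (k a) (msg a P)) zero
  | comm_fw (a b P) : Red (par (fw a b) (msg a P)) (msg b P)
  | comm_br (a b P) : Red (par (br a b) (msg a P)) (fw b (CName.quote P))
  | comm_bl (a b P) : Red (par (bl a b) (msg a P)) (fw (CName.quote P) b)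
  | comm_s (a b c P) : Red (par (s a b c) (msg a P)) (fw b c)
  | comm_drop (a P) : Red (par (drop a) (msg a P)) P
  | parCtx {P P'} (Q) : Red P P' → Red (par P Q) (par P' Q)
  | equiv {P P' Q Q'} : SC P P' → Red P' Q' → SC Q' Q → Red P Q

/-- `D(x,v,w) := d(x,v,w) | fw(v,x) | *(w)` -/
def D (x v w : CName) : CProc := par (par (d x v w) (fw v x)) (drop w)

/-- `*_{(x,v,w)} P := m(x, D(x,v,w) | P) | D(x,v,w)` -/
def repl (x v w : CName) (P : CProc) : CProc :=
  par (msg x (par (D x v w) P)) (D x v w)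

/-! The message `m(x, Q)` first meets `d(x,v,w)` and is copied onto `v` and `w`; the copy on `v`
is forwarded back to `x` by `fw(v,x)`, and the copy on `w` is run by `*(w)`. This turns
`m(x, Q) | D(x,v,w)` into `m(x, Q) | Q`, and for `Q = D(x,v,w) | P` the result regroups as
`*_{(x,v,w)}P | P`. -/

infix:50 " ≡ " => SC
infix:50 " ⇝ " => Red

instance : Trans SC SC SC := ⟨SC.trans⟩
instance : Trans SC Red Red := ⟨fun h r => Red.equiv h r (SC.refl _)⟩
instance : Trans Red SC Red := ⟨fun r h => Red.equiv (SC.refl _) r h⟩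

namespace SC

theorem par_left_comm (P Q R : CProc) : par P (par Q R) ≡ par Q (par P R) :=
  calc par P (par Q R)
    _ ≡ par (par P Q) R := symm (parAssoc P Q R)
    _ ≡ par (par Q P) R := parCong (parComm P Q) (refl R)
    _ ≡ par Q (par P R) := parAssoc Q P R

theorem par_par_par_comm (P Q R S : CProc) :
    par (par P Q) (par R S) ≡ par (par P R) (par Q S) :=
  calc par (par P Q) (par R S)
    _ ≡ par P (par Q (par R S)) := parAssoc P Q (par R S)
    _ ≡ par P (par R (par Q S)) := parCong (refl P) (par_left_comm Q R S)
    _ ≡ par (par P R) (par Q S) := symm (parAssoc P R (par Q S))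

end SC

theorem Red.parCtx_right (P : CProc) {Q Q' : CProc} (h : Q ⇝ Q') : par P Q ⇝ par P Q' :=
  calc par P Q
    _ ≡ par Q P := SC.parComm P Q
    _ ⇝ par Q' P := Red.parCtx P h
    _ ≡ par P Q' := SC.parComm Q' P

theorem msg_par_D_unfolds (x v w : CName) (Q : CProc) :
    ∃ P₁ P₂ : CProc, par (msg x Q) (D x v w) ⇝ P₁ ∧ P₁ ⇝ P₂ ∧ P₂ ⇝ par (msg x Q) Q := by
  refine ⟨par (par (msg v Q) (msg w Q)) (par (fw v x) (drop w)),
    par (msg x Q) (par (msg w Q) (drop w)), ?_, ?_, ?_⟩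
  · calc par (msg x Q) (D x v w)
      _ ≡ par (msg x Q) (par (d x v w) (par (fw v x) (drop w))) :=
        SC.parCong (SC.refl _) (SC.parAssoc _ _ _)
      _ ≡ par (d x v w) (par (msg x Q) (par (fw v x) (drop w))) := SC.par_left_comm _ _ _
      _ ≡ par (par (d x v w) (msg x Q)) (par (fw v x) (drop w)) := SC.symm (SC.parAssoc _ _ _)
      _ ⇝ _ := Red.parCtx _ (Red.comm_d x v w Q)
  · calc par (par (msg v Q) (msg w Q)) (par (fw v x) (drop w))
      _ ≡ par (par (msg v Q) (fw v x)) (par (msg w Q) (drop w)) := SC.par_par_par_comm _ _ _ _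
      _ ≡ par (par (fw v x) (msg v Q)) (par (msg w Q) (drop w)) :=
        SC.parCong (SC.parComm _ _) (SC.refl _)
      _ ⇝ _ := Red.parCtx _ (Red.comm_fw v x Q)
  · calc par (msg x Q) (par (msg w Q) (drop w))
      _ ≡ par (msg x Q) (par (drop w) (msg w Q)) := SC.parCong (SC.refl _) (SC.parComm _ _)
      _ ⇝ par (msg x Q) Q := Red.parCtx_right _ (Red.comm_drop w Q)

/-- With `x, v, w` pairwise distinct, `*_{(x,v,w)}P` reduces in three steps
(up to structural congruence) to `*_{(x,v,w)}P | P`. -/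
theorem repl_unfolds (x v w : CName) (P : CProc)
    (hxv : x ≠ v) (hxw : x ≠ w) (hvw : v ≠ w) :
    ∃ P₁ P₂ : CProc,
      Red (repl x v w P) P₁ ∧ Red P₁ P₂ ∧ Red P₂ (par (repl x v w P) P) := by
  obtain ⟨P₁, P₂, h₁, h₂, h₃⟩ := msg_par_D_unfolds x v w (par (D x v w) P)
  refine ⟨P₁, P₂, h₁, h₂, ?_⟩
  calc P₂
    _ ⇝ par (msg x (par (D x v w) P)) (par (D x v w) P) := h₃
    _ ≡ par (repl x v w P) P := SC.symm (SC.parAssoc _ _ _)
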